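/- arXiv:2507.06130 — 3 statements merged into one kernel-verified Lean document; each statement's English description precedes it below -/
import Mathlib

section
/- Let L be a D₄-quartic field with signature (2,1) and real quadratic subfield K. The action of the nontrivial element σ of Gal(L/K) on the unit lattice E_L = O_L^×/{±1} (a free abelian group of rank 2) is not given by multiplication by +1 or by −1. -/
open NumberField
open scoped Classical


section aux

variable (A B : Type*) [Field A] [NumberField A] [Field B] [NumberField B]

lemma units_rank_le_of_monoidHom (f : (𝓞 A)ˣ →* (𝓞 B)ˣ)
    (hf : ∀ u : (𝓞 A)ˣ, f u ∈ Units.torsion B → u ∈ Units.torsion A) :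
    Units.rank A ≤ Units.rank B := by
  have hle : Units.torsion A ≤ (Units.torsion B).comap f := by
    intro u hu
    exact f.isOfFinOrder ((CommGroup.mem_torsion u).mp hu)
  letI : Module ℤ (Additive ((𝓞 A)ˣ ⧸ Units.torsion A)) :=
    AddCommGroup.toIntModule (Additive ((𝓞 A)ˣ ⧸ Units.torsion A))
  letI : Module ℤ (Additive ((𝓞 B)ˣ ⧸ Units.torsion B)) :=
    AddCommGroup.toIntModule (Additive ((𝓞 B)ˣ ⧸ Units.torsion B))
  let g : ((𝓞 A)ˣ ⧸ Units.torsion A) →* ((𝓞 B)ˣ ⧸ Units.torsion B) :=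
    QuotientGroup.map _ _ f hle
  have hker : ∀ q : (𝓞 A)ˣ ⧸ Units.torsion A, g q = 1 → q = 1 := by
    intro q hq
    induction q using QuotientGroup.induction_on with
    | H u =>
      rw [QuotientGroup.map_mk] at hq
      exact (QuotientGroup.eq_one_iff u).mpr (hf u ((QuotientGroup.eq_one_iff _).mp hq))
  have hginj : Function.Injective g := (injective_iff_map_eq_one g).mpr hker
  let g' := AddMonoidHom.toIntLinearMap (M := Additive ((𝓞 A)ˣ ⧸ Units.torsion A))
    (M₂ := Additive ((𝓞 B)ˣ ⧸ Units.torsion B))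
    { toFun := fun x => Additive.ofMul (g x.toMul),
      map_zero' := congrArg Additive.ofMul (map_one g),
      map_add' := fun a b => congrArg Additive.ofMul (map_mul g _ _) }
  have hinj : Function.Injective g' := fun a b hab => by
    have := hginj (congrArg Additive.toMul hab)
    exact Additive.toMul.injective this
  haveI := Module.Finite.of_basis (Units.basisModTorsion B)
  have h1 := Module.finrank_eq_card_basis (Units.basisModTorsion A)
  have h2 := Module.finrank_eq_card_basis (Units.basisModTorsion B)
  have h3 := LinearMap.finrank_le_finrank_of_injective hinj
  simpa [h1, h2] using h3

lemma exists_nontorsion_unit (hA : 0 < Units.rank A) :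
    ∃ u : (𝓞 A)ˣ, ¬ IsOfFinOrder u := by
  letI : Module ℤ (Additive ((𝓞 A)ˣ ⧸ Units.torsion A)) :=
    AddCommGroup.toIntModule (Additive ((𝓞 A)ˣ ⧸ Units.torsion A))
  refine ⟨Units.fundSystem A ⟨0, hA⟩, fun h => ?_⟩
  have h0 : Units.basisModTorsion A ⟨0, hA⟩ = 0 := by
    rw [← Units.fundSystem_mk]
    have : (QuotientGroup.mk (Units.fundSystem A ⟨0, hA⟩) :
        (𝓞 A)ˣ ⧸ Units.torsion A) = 1 :=
      (QuotientGroup.eq_one_iff _).mpr h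
    rw [this]; rfl
  exact Module.Basis.ne_zero (Units.basisModTorsion A) ⟨0, hA⟩ h0

end aux

set_option maxHeartbeats 1000000

section helper
variable {L : Type*} [Field L] [NumberField L]

-- real quadratic intermediate field has unit rank 1
lemma rank_one_of_quadratic (K₁ : IntermediateField ℚ L) [NumberField K₁]
    (hdeg : Module.finrank ℚ K₁ = 2) (ψ : K₁ →+* ℝ) : Units.rank K₁ = 1 := by
  have hφ : ComplexEmbedding.IsReal (Complex.ofRealHom.comp ψ) := by
    rw [ComplexEmbedding.isReal_iff]
    ext x
    simp [ComplexEmbedding.conjugate_coe_eq]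
  have hne : Nonempty {w : InfinitePlace K₁ // w.IsReal} :=
    ⟨⟨InfinitePlace.mk (Complex.ofRealHom.comp ψ), ⟨_, hφ, rfl⟩⟩⟩
  have h1 : 0 < InfinitePlace.nrRealPlaces K₁ := by
    rw [Fintype.card_pos_iff]; exact hne
  have h2 : InfinitePlace.nrRealPlaces K₁ + 2 * InfinitePlace.nrComplexPlaces K₁ = 2 := by
    rw [InfinitePlace.card_add_two_mul_card_eq_rank, hdeg]
  have h3 : Fintype.card (InfinitePlace K₁) = 2 := by
    rw [InfinitePlace.card_eq_nrRealPlaces_add_nrComplexPlaces]; omega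
  rw [Units.rank, h3]
end helper

/-- for a `D₄`-quartic field `L` of signature `(2,1)` with real quadratic
subfield `K` and `σ` the nontrivial automorphism of `L` over `K`, the action of `σ` on the
unit lattice `E_L = 𝓞_L^× / {±1}` is not multiplication by `+1` nor by `-1`
(i.e. it is not the case that `σ u = ±u` for all units `u`, nor that `σ u = ±u⁻¹`
for all units `u`). -/
theorem sigma_action_on_unit_lattice_nontrivial {L : Type*} [Field L] [NumberField L]
    (hdeg : Module.finrank ℚ L = 4)
    (hD4 : Nonempty (((IntermediateField.normalClosure ℚ L (AlgebraicClosure L)) ≃ₐ[ℚ]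
      (IntermediateField.normalClosure ℚ L (AlgebraicClosure L))) ≃* DihedralGroup 4))
    (hsigr : Nat.card {w : InfinitePlace L // w.IsReal} = 2)
    (hsigc : Nat.card {w : InfinitePlace L // w.IsComplex} = 1)
    (K : Subfield L) (hKdeg : Module.finrank ℚ K = 2)
    (hKreal : Nonempty (K →+* ℝ))
    (σ : L ≃+* L) (hσ : σ ≠ RingEquiv.refl L) (hσK : ∀ x ∈ K, σ x = x)
    (hroots : ∀ ζ : L, (∃ n : ℕ, 0 < n ∧ ζ ^ n = 1) → ζ = 1 ∨ ζ = -1) :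
    (¬ ∀ u : (𝓞 L)ˣ, σ (algebraMap (𝓞 L) L u) = algebraMap (𝓞 L) L u ∨
        σ (algebraMap (𝓞 L) L u) = -(algebraMap (𝓞 L) L u)) ∧
    (¬ ∀ u : (𝓞 L)ˣ, σ (algebraMap (𝓞 L) L u) = algebraMap (𝓞 L) L (u⁻¹ : (𝓞 L)ˣ) ∨
        σ (algebraMap (𝓞 L) L u) = -(algebraMap (𝓞 L) L (u⁻¹ : (𝓞 L)ˣ))) := by
  -- the intermediate field corresponding to K
  set K₁ : IntermediateField ℚ L := K.toIntermediateField (fun x => by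
    rw [eq_ratCast (algebraMap ℚ L) x]; exact SubfieldClass.ratCast_mem K x) with hK₁def
  have hmem : ∀ x : L, x ∈ K₁ ↔ x ∈ K := fun x => Iff.rfl
  -- transfer structure from K to K₁
  have eK : (K₁ : Type _) ≃+* K :=
    { toFun := fun x => ⟨x.1, x.2⟩
      invFun := fun x => ⟨x.1, x.2⟩
      left_inv := fun x => rfl
      right_inv := fun x => rfl
      map_mul' := fun x y => rfl
      map_add' := fun x y => rfl }
  have eKlin : (K : Type _) ≃ₗ[ℚ] K₁ :=
    { toFun := fun x => ⟨x.1, x.2⟩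
      invFun := fun x => ⟨x.1, x.2⟩
      left_inv := fun x => rfl
      right_inv := fun x => rfl
      map_add' := fun x y => rfl
      map_smul' := fun q x => by
        apply Subtype.ext
        show ((q • x : K) : L) = ((q • (⟨x.1, x.2⟩ : K₁) : K₁) : L)
        rw [Rat.smul_def, Rat.smul_def]
        push_cast
        rfl }
  have hK₁deg : Module.finrank ℚ K₁ = 2 := by
    rw [← hKdeg]; exact (LinearEquiv.finrank_eq eKlin).symm
  haveI : FiniteDimensional ℚ K₁ := Module.finite_of_finrank_pos (by rw [hK₁deg]; norm_num)
  haveI : NumberField K₁ := ⟨⟩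
  have hrkK : Units.rank K₁ = 1 :=
    rank_one_of_quadratic K₁ hK₁deg (hKreal.some.comp eK.toRingHom)
  -- rank of L is 2
  have hrkL : Units.rank L = 2 := by
    have h3 : Fintype.card (InfinitePlace L) = 3 := by
      rw [InfinitePlace.card_eq_nrRealPlaces_add_nrComplexPlaces]
      show Fintype.card {w : InfinitePlace L // w.IsReal} +
        Fintype.card {w : InfinitePlace L // w.IsComplex} = 3
      rw [← Nat.card_eq_fintype_card, ← Nat.card_eq_fintype_card, hsigr, hsigc]
    rw [Units.rank, h3]
  -- the fixed field of σ is K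
  have hfix : ∀ x : L, σ x = x → x ∈ K := by
    set F₁ : IntermediateField ℚ L :=
      (RingHom.eqLocusField (σ : L →+* L) (RingHom.id L)).toIntermediateField (fun x => by
        show σ (algebraMap ℚ L x) = algebraMap ℚ L x
        rw [eq_ratCast (algebraMap ℚ L) x, map_ratCast]) with hF₁def
    have hmemF : ∀ x : L, x ∈ F₁ ↔ σ x = x := fun x => Iff.rfl
    have hKF : K₁ ≤ F₁ := fun x hx => hσK x hx
    haveI : FiniteDimensional ℚ F₁ := FiniteDimensional.left ℚ F₁ L
    haveI : FiniteDimensional F₁ L := FiniteDimensional.right ℚ F₁ L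
    have hFtop : F₁ ≠ ⊤ := by
      intro htop
      apply hσ
      ext x
      exact (hmemF x).mp (htop ▸ IntermediateField.mem_top)
    have hmul : Module.finrank ℚ F₁ * Module.finrank F₁ L = 4 := by
      rw [Module.finrank_mul_finrank, hdeg]
    have hF₁L : Module.finrank F₁ L ≠ 1 := by
      intro h1
      apply hFtop
      refine IntermediateField.eq_of_le_of_finrank_le le_top ?_
      rw [IntermediateField.finrank_top']
      rw [h1, mul_one] at hmul
      omega
    have hposF : 0 < Module.finrank F₁ L := Module.finrank_pos
    have hb2 : 2 ≤ Module.finrank F₁ L := by omega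
    have hle2 : Module.finrank ℚ F₁ ≤ 2 := by nlinarith [hmul, hb2]
    have hKeq : K₁ = F₁ := IntermediateField.eq_of_le_of_finrank_le hKF (by omega)
    intro x hx
    have : x ∈ F₁ := (hmemF x).mpr hx
    rw [← hKeq] at this
    exact this
  constructor
  · intro h1
    have hsq : ∀ u : (𝓞 L)ˣ, ((algebraMap (𝓞 L) L u) ^ 2) ∈ K₁ := by
      intro u
      apply (hmem _).mpr
      apply hfix
      rcases h1 u with h | h
      · rw [map_pow, h]
      · rw [map_pow, h]; ring
    set sqK : (𝓞 L)ˣ →* K₁ :=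
      { toFun := fun u => ⟨(algebraMap (𝓞 L) L u) ^ 2, hsq u⟩
        map_one' := by
          apply Subtype.ext
          show (algebraMap (𝓞 L) L ((1 : (𝓞 L)ˣ) : 𝓞 L)) ^ 2 = 1
          rw [Units.val_one, map_one, one_pow]
        map_mul' := fun u v => by
          apply Subtype.ext
          show (algebraMap (𝓞 L) L ((u * v : (𝓞 L)ˣ) : 𝓞 L)) ^ 2 =
            (algebraMap (𝓞 L) L ((u : (𝓞 L)ˣ) : 𝓞 L)) ^ 2 *
            (algebraMap (𝓞 L) L ((v : (𝓞 L)ˣ) : 𝓞 L)) ^ 2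
          rw [Units.val_mul, map_mul, mul_pow] } with hsqKdef
    have hint : ∀ u : (𝓞 L)ˣ, IsIntegral ℤ ((sqK u : K₁)) := by
      intro u
      have h2 : IsIntegral ℤ ((algebraMap (𝓞 L) L u) ^ 2) :=
        ((u : 𝓞 L).isIntegral_coe).pow 2
      exact IsIntegral.tower_bot_of_field h2
    set F1 : (𝓞 L)ˣ →* 𝓞 K₁ := RingOfIntegers.restrict_monoidHom sqK hint with hF1def
    set F : (𝓞 L)ˣ →* (𝓞 K₁)ˣ :=
      { toFun := fun u => Units.mkOfMulEqOne (F1 u) (F1 u⁻¹)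
          (by rw [← map_mul, mul_inv_cancel, map_one])
        map_one' := Units.ext (map_one F1)
        map_mul' := fun u v => Units.ext (map_mul F1 u v) } with hFdef
    have htor : ∀ u : (𝓞 L)ˣ, F u ∈ Units.torsion K₁ → u ∈ Units.torsion L := by
      intro u hu
      have hfin : IsOfFinOrder (F u) := (CommGroup.mem_torsion _).mp hu
      obtain ⟨n, hn, hpow⟩ := isOfFinOrder_iff_pow_eq_one.mp hfin
      have h1' : (F1 u) ^ n = 1 := by
        have := congrArg (fun t : (𝓞 K₁)ˣ => (t : 𝓞 K₁)) hpow
        exact (by simpa using this : ((F u : 𝓞 K₁)) ^ n = 1)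
      have h2' : ((algebraMap (𝓞 L) L u) ^ 2) ^ n = 1 := by
        have := congrArg (fun t : 𝓞 K₁ => ((algebraMap (𝓞 K₁) K₁ t : K₁) : L)) h1'
        exact (by simpa [map_pow] using this : ((algebraMap (𝓞 K₁) K₁ (F1 u) : K₁) : L) ^ n = 1)
      rcases hroots (algebraMap (𝓞 L) L u)
          ⟨2 * n, by positivity, by rw [pow_mul]; exact h2'⟩ with h | h
      all_goals {
        apply (CommGroup.mem_torsion _).mpr
        apply isOfFinOrder_iff_pow_eq_one.mpr
        refine ⟨2, two_pos, Units.ext (RingOfIntegers.ext ?_)⟩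
        simp only [Units.val_pow_eq_pow_val, map_pow, map_one, h]
        norm_num }
    have hcontra := units_rank_le_of_monoidHom L K₁ F htor
    rw [hrkL, hrkK] at hcontra
    omega
  · intro h2
    obtain ⟨v, hv⟩ := exists_nontorsion_unit K₁ (by rw [hrkK]; norm_num)
    have hintv : ∀ u : (𝓞 K₁)ˣ, IsIntegral ℤ
        ((algebraMap K₁ L) (algebraMap (𝓞 K₁) K₁ (u : 𝓞 K₁))) := fun u =>
      IsIntegral.map (IsScalarTower.toAlgHom ℤ K₁ L) (RingOfIntegers.isIntegral_coe _)
    set incK : (𝓞 K₁)ˣ →* L := (algebraMap K₁ L).toMonoidHom.comp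
      ((algebraMap (𝓞 K₁) K₁).toMonoidHom.comp (Units.coeHom (𝓞 K₁))) with hincKdef
    set G1 : (𝓞 K₁)ˣ →* 𝓞 L := RingOfIntegers.restrict_monoidHom incK
      (fun u => hintv u) with hG1def
    set G : (𝓞 K₁)ˣ →* (𝓞 L)ˣ :=
      { toFun := fun u => Units.mkOfMulEqOne (G1 u) (G1 u⁻¹)
          (by rw [← map_mul, mul_inv_cancel, map_one])
        map_one' := Units.ext (map_one G1)
        map_mul' := fun u v => Units.ext (map_mul G1 u v) } with hGdef
    set w : (𝓞 L)ˣ := G v with hwdef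
    set x : L := algebraMap (𝓞 L) L (w : 𝓞 L) with hxdef
    have hxval : x = (algebraMap K₁ L) (algebraMap (𝓞 K₁) K₁ (v : 𝓞 K₁)) := rfl
    have hxK : x ∈ K := by
      rw [hxval]
      exact (hmem _).mp (algebraMap (𝓞 K₁) K₁ (v : 𝓞 K₁)).2
    have hσx : σ x = x := hσK x hxK
    have hprod : x * algebraMap (𝓞 L) L ((w⁻¹ : (𝓞 L)ˣ) : 𝓞 L) = 1 := by
      rw [hxdef, ← map_mul, w.mul_inv, map_one]
    -- v is not torsion, so x ≠ ±1
    have hxpm : ¬ (x = 1 ∨ x = -1) := by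
      intro hx
      apply hv
      apply isOfFinOrder_iff_pow_eq_one.mpr
      refine ⟨2, two_pos, Units.ext (RingOfIntegers.ext ((algebraMap K₁ L).injective ?_))⟩
      have hx2 : x ^ 2 = 1 := by rcases hx with hx | hx <;> rw [hx] <;> ring
      simp only [Units.val_pow_eq_pow_val, map_pow, map_one, ← hxval, hx2]
      simp
    rcases h2 w with h | h
    · rw [hσx] at h
      have hx2 : x ^ 2 = 1 := by
        rw [pow_two]; nth_rewrite 2 [h]; exact hprod
      exact hxpm (hroots x ⟨2, two_pos, hx2⟩)
    · rw [hσx] at h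
      have hy : algebraMap (𝓞 L) L ((w⁻¹ : (𝓞 L)ˣ) : 𝓞 L) = -x := by
        rw [h]; ring
      have hx2 : x ^ 2 = -1 := by
        rw [hy] at hprod
        linear_combination -hprod
      have hx4 : x ^ 4 = 1 := by
        rw [show (4:ℕ) = 2*2 from rfl, pow_mul, hx2]; ring
      exact hxpm (hroots x ⟨4, by norm_num, hx4⟩)
end

section
/- Let L be a quartic number field with signature (2,1) where the only roots of unity are ±1, containing a real quadratic subfield K with nontrivial automorphism σ over K. Let u₁ ∈ O_L^× be a unit with nontrivial image in E_L = O_L^×/{±1} and with N_{L/K}(u₁) = ±1, and let u₂ ∈ O_K^× be a unit with nontrivial image in E_L. Then log|σ₁(u₁)| and log|σ₁(u₂)| are linearly independent over ℚ, where σ₁ is a real embedding of L. -/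
open NumberField

/-- with `u₁` a unit of `𝓞 L` nontrivial modulo `±1` with relative norm
`N_{L/K}(u₁) = u₁ ⬝ σ(u₁) = ±1`, and `u₂` a unit of `𝓞 L` lying in the real quadratic
subfield `K` and nontrivial modulo `±1`, the numbers `log|σ₁ u₁|` and `log|σ₁ u₂|` are
linearly independent over `ℚ`. -/
theorem log_units_linearIndependent {L : Type*} [Field L] [NumberField L]
    (hdeg : Module.finrank ℚ L = 4)
    (K : Subfield L) (hKdeg : Module.finrank ℚ K = 2)
    (hKreal : Nonempty (K →+* ℝ))
    (σ₁ σ₂ : L →+* ℝ) (hσ₁₂ : σ₁ ≠ σ₂) (τ : L →+* ℂ) (hτ : ∃ x, (τ x).im ≠ 0)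
    (σ : L ≃+* L) (hσ : σ ≠ RingEquiv.refl L) (hσK : ∀ x ∈ K, σ x = x)
    (h1 : ∀ x, σ₁ (σ x) = σ₂ x) (h2 : ∀ x, σ₂ (σ x) = σ₁ x)
    (h3 : ∀ x, τ (σ x) = starRingEnd ℂ (τ x))
    (hroots : ∀ ζ : L, (∃ n : ℕ, 0 < n ∧ ζ ^ n = 1) → ζ = 1 ∨ ζ = -1)
    (hsum : ∀ w : (𝓞 L)ˣ, Real.log |σ₁ (algebraMap (𝓞 L) L w)| +
      Real.log |σ₂ (algebraMap (𝓞 L) L w)| +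
      2 * Real.log ‖τ (algebraMap (𝓞 L) L w)‖ = 0)
    (u₁ : (𝓞 L)ˣ)
    (hu₁ : algebraMap (𝓞 L) L u₁ ≠ 1 ∧ algebraMap (𝓞 L) L u₁ ≠ -1)
    (hu₁norm : algebraMap (𝓞 L) L u₁ * σ (algebraMap (𝓞 L) L u₁) = 1 ∨
      algebraMap (𝓞 L) L u₁ * σ (algebraMap (𝓞 L) L u₁) = -1)
    (u₂ : (𝓞 L)ˣ) (hu₂K : algebraMap (𝓞 L) L u₂ ∈ K)
    (hu₂ : algebraMap (𝓞 L) L u₂ ≠ 1 ∧ algebraMap (𝓞 L) L u₂ ≠ -1) :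
    LinearIndependent ℚ
      ![Real.log |σ₁ (algebraMap (𝓞 L) L u₁)|, Real.log |σ₁ (algebraMap (𝓞 L) L u₂)|] := by
  rw [LinearIndependent.pair_iff]
  intro s t hst
  set v₁ : L := algebraMap (𝓞 L) L u₁ with hv₁def
  set v₂ : L := algebraMap (𝓞 L) L u₂ with hv₂def
  -- the v's are nonzero
  have hunit : ∀ u : (𝓞 L)ˣ, (algebraMap (𝓞 L) L u : L) ≠ 0 := by
    intro u hu0
    have h : (algebraMap (𝓞 L) L u) * (algebraMap (𝓞 L) L ↑u⁻¹) = 1 := by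
      rw [← map_mul]
      norm_num
    rw [hu0, zero_mul] at h
    exact zero_ne_one h
  have hv₁ne : v₁ ≠ 0 := hunit u₁
  have hv₂ne : v₂ ≠ 0 := hunit u₂
  -- key: an element whose image under a real embedding has zero log-abs is ±1
  have keyemb : ∀ (φ : L →+* ℝ) (x : L), x ≠ 0 → Real.log |φ x| = 0 → x = 1 ∨ x = -1 := by
    intro φ x hx hlog
    have hφx : φ x ≠ 0 := fun h => hx (φ.injective (by rw [h, map_zero]))
    have habs : |φ x| = 1 := by
      rcases Real.log_eq_zero.mp hlog with h | h | h
      · exact absurd h (abs_ne_zero.mpr hφx)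
      · exact h
      · have := abs_nonneg (φ x); linarith
    rcases (abs_eq (by norm_num : (0:ℝ) ≤ 1)).mp habs with h | h
    · exact Or.inl (φ.injective (by rw [h, map_one]))
    · exact Or.inr (φ.injective (by rw [h, map_neg, map_one]))
  set a : ℝ := Real.log |σ₁ v₁| with hadef
  set b : ℝ := Real.log |σ₁ v₂| with hbdef
  have ha : a ≠ 0 := by
    intro h
    rcases keyemb σ₁ v₁ hv₁ne h with h' | h'
    · exact hu₁.1 h'
    · exact hu₁.2 h'
  have hb : b ≠ 0 := by
    intro h
    rcases keyemb σ₁ v₂ hv₂ne h with h' | h'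
    · exact hu₂.1 h'
    · exact hu₂.2 h'
  have hσ₁v₁ : σ₁ v₁ ≠ 0 := fun h => hv₁ne (σ₁.injective (by rw [h, map_zero]))
  have hσ₁v₂ : σ₁ v₂ ≠ 0 := fun h => hv₂ne (σ₁.injective (by rw [h, map_zero]))
  have hσ₂v₁ : σ₂ v₁ ≠ 0 := fun h => hv₁ne (σ₂.injective (by rw [h, map_zero]))
  have hσ₂v₂ : σ₂ v₂ ≠ 0 := fun h => hv₂ne (σ₂.injective (by rw [h, map_zero]))
  -- σ₂ v₂ = σ₁ v₂ since v₂ ∈ K is fixed by σ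
  have hrel2 : σ₂ v₂ = σ₁ v₂ := by
    have h := h2 v₂
    rwa [hσK v₂ hu₂K] at h
  -- log |σ₂ v₁| = -a, from the relative norm condition
  have hrel1 : Real.log |σ₂ v₁| = -a := by
    have hprod : |σ₁ v₁| * |σ₂ v₁| = 1 := by
      rw [← abs_mul, ← h1 v₁, ← map_mul]
      rcases hu₁norm with h | h <;> rw [h] <;> simp
    have hlog : Real.log (|σ₁ v₁| * |σ₂ v₁|) = 0 := by rw [hprod, Real.log_one]
    rw [Real.log_mul (abs_ne_zero.mpr hσ₁v₁) (abs_ne_zero.mpr hσ₂v₁)] at hlog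
    linarith
  -- clear denominators: pass to integers
  have hst' : (s : ℝ) * a + (t : ℝ) * b = 0 := by
    rw [Rat.smul_def, Rat.smul_def] at hst; exact hst
  set m : ℤ := s.num * t.den with hmdef
  set n : ℤ := t.num * s.den with hndef
  have hsden : ((s.den : ℝ)) ≠ 0 := Nat.cast_ne_zero.mpr s.den_nz
  have htden : ((t.den : ℝ)) ≠ 0 := Nat.cast_ne_zero.mpr t.den_nz
  have hsnum : (s.num : ℝ) = (s : ℝ) * s.den := by
    rw [Rat.cast_def s]; field_simp
  have htnum : (t.num : ℝ) = (t : ℝ) * t.den := by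
    rw [Rat.cast_def t]; field_simp
  have hmn : (m : ℝ) * a + (n : ℝ) * b = 0 := by
    rw [hmdef, hndef]
    push_cast
    rw [hsnum, htnum]
    linear_combination ((s.den : ℝ) * (t.den : ℝ)) * hst'
  -- form the auxiliary element w = v₁^m * v₂^n and show it is ±1
  have hwne : v₁ ^ m * v₂ ^ n ≠ 0 :=
    mul_ne_zero (zpow_ne_zero m hv₁ne) (zpow_ne_zero n hv₂ne)
  have hw1 : Real.log |σ₁ (v₁ ^ m * v₂ ^ n)| = 0 := by
    rw [map_mul, map_zpow₀, map_zpow₀, Real.log_abs,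
      Real.log_mul (zpow_ne_zero m hσ₁v₁) (zpow_ne_zero n hσ₁v₂),
      Real.log_zpow, Real.log_zpow, ← Real.log_abs (σ₁ v₁), ← Real.log_abs (σ₁ v₂)]
    exact hmn
  have hwpm := keyemb σ₁ _ hwne hw1
  -- apply σ₂ to w = ±1
  have hw2 : Real.log |σ₂ (v₁ ^ m * v₂ ^ n)| = 0 := by
    rcases hwpm with h | h <;> rw [h] <;> simp
  have hmn2 : -(m : ℝ) * a + (n : ℝ) * b = 0 := by
    rw [map_mul, map_zpow₀, map_zpow₀, Real.log_abs,
      Real.log_mul (zpow_ne_zero m hσ₂v₁) (zpow_ne_zero n hσ₂v₂),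
      Real.log_zpow, Real.log_zpow, ← Real.log_abs (σ₂ v₁), ← Real.log_abs (σ₂ v₂),
      hrel1, hrel2] at hw2
    linarith
  -- conclude m = n = 0
  have hn0 : (n : ℝ) = 0 := by
    have : (n : ℝ) * b = 0 := by linarith
    rcases mul_eq_zero.mp this with h | h
    · exact h
    · exact absurd h hb
  have hm0 : (m : ℝ) = 0 := by
    have : (m : ℝ) * a = 0 := by linarith
    rcases mul_eq_zero.mp this with h | h
    · exact h
    · exact absurd h ha
  have hmz : m = 0 := by exact_mod_cast hm0
  have hnz : n = 0 := by exact_mod_cast hn0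
  constructor
  · have : s.num = 0 := by
      rcases mul_eq_zero.mp hmz with h | h
      · exact h
      · exact absurd h (by exact_mod_cast t.den_nz)
    exact Rat.num_eq_zero.mp this
  · have : t.num = 0 := by
      rcases mul_eq_zero.mp hnz with h | h
      · exact h
      · exact absurd h (by exact_mod_cast s.den_nz)
    exact Rat.num_eq_zero.mp this
end

section
/- Let ω = (n⁴+n³)^{1/4} for n a positive integer, u = (log|ω+n| − log|ω−n|, log|ω−n| − log|ω+n|, 0), and w = (3log n − 2log|ω−n| − 2log|ω+n|, 3log n − 2log|ω+n| − 2log|ω−n|, 6log n − 8log√(ω²+n²)). Then ‖u‖² = 2(log n)² + O(log n) and ‖w‖² = 6(log n)² + O(log n), so ‖w‖/‖u‖ → √3 as n → ∞. -/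
open Filter Topology Asymptotics

/-- The vector `u(n)` of STATEMENT 15, with `ω = (n⁴+n³)^{1/4}`. -/
noncomputable def uVec15 (n : ℕ) : EuclideanSpace ℝ (Fin 3) :=
  (WithLp.equiv 2 (Fin 3 → ℝ)).symm
    ![Real.log |((n : ℝ) ^ 4 + (n : ℝ) ^ 3) ^ ((1 : ℝ) / 4) + n| -
        Real.log |((n : ℝ) ^ 4 + (n : ℝ) ^ 3) ^ ((1 : ℝ) / 4) - n|,
      Real.log |((n : ℝ) ^ 4 + (n : ℝ) ^ 3) ^ ((1 : ℝ) / 4) - n| -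
        Real.log |((n : ℝ) ^ 4 + (n : ℝ) ^ 3) ^ ((1 : ℝ) / 4) + n|, 0]

/-- The vector `w(n)` of STATEMENT 15, with `ω = (n⁴+n³)^{1/4}`. -/
noncomputable def wVec15 (n : ℕ) : EuclideanSpace ℝ (Fin 3) :=
  (WithLp.equiv 2 (Fin 3 → ℝ)).symm
    ![3 * Real.log n -
        2 * Real.log |((n : ℝ) ^ 4 + (n : ℝ) ^ 3) ^ ((1 : ℝ) / 4) - n| -
        2 * Real.log |((n : ℝ) ^ 4 + (n : ℝ) ^ 3) ^ ((1 : ℝ) / 4) + n|,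
      3 * Real.log n -
        2 * Real.log |((n : ℝ) ^ 4 + (n : ℝ) ^ 3) ^ ((1 : ℝ) / 4) + n| -
        2 * Real.log |((n : ℝ) ^ 4 + (n : ℝ) ^ 3) ^ ((1 : ℝ) / 4) - n|,
      6 * Real.log n -
        8 * Real.log (Real.sqrt ((((n : ℝ) ^ 4 + (n : ℝ) ^ 3) ^ ((1 : ℝ) / 4)) ^ 2 + (n : ℝ) ^ 2))]

/-- The fourth root `ω = (n⁴+n³)^{1/4}`. -/
noncomputable def om15 (n : ℕ) : ℝ := ((n:ℝ)^4 + (n:ℝ)^3) ^ ((1:ℝ)/4)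
noncomputable def aF15 (n : ℕ) : ℝ := Real.log |om15 n + n|
noncomputable def bF15 (n : ℕ) : ℝ := Real.log |om15 n - n|
noncomputable def sF15 (n : ℕ) : ℝ := Real.log (Real.sqrt ((om15 n)^2 + (n:ℝ)^2))

lemma om15_nonneg (n : ℕ) : 0 ≤ om15 n := by
  unfold om15; positivity

lemma om15_pow4 (n : ℕ) : (om15 n)^4 = (n:ℝ)^4 + (n:ℝ)^3 := by
  unfold om15
  rw [← Real.rpow_natCast (((n:ℝ)^4 + (n:ℝ)^3) ^ ((1:ℝ)/4)) 4,
    ← Real.rpow_mul (by positivity)]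
  norm_num

lemma lt_om15 (n : ℕ) (hn : 1 ≤ n) : (n:ℝ) < om15 n := by
  have hn' : (1:ℝ) ≤ n := by exact_mod_cast hn
  have h4 : (n:ℝ)^4 < (om15 n)^4 := by
    rw [om15_pow4]; nlinarith [pow_pos (show (0:ℝ) < n by linarith) 3]
  exact lt_of_pow_lt_pow_left₀ 4 (om15_nonneg n) h4

lemma om15_le (n : ℕ) (hn : 1 ≤ n) : om15 n ≤ (n:ℝ) + 1 := by
  have hn' : (1:ℝ) ≤ n := by exact_mod_cast hn
  have h4 : (om15 n)^4 ≤ ((n:ℝ)+1)^4 := by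
    rw [om15_pow4]
    nlinarith [pow_pos (show (0:ℝ) < n by linarith) 3, sq_nonneg ((n:ℝ)), pow_pos (show (0:ℝ) < n by linarith) 2]
  exact le_of_pow_le_pow_left₀ (by norm_num) (by positivity) h4

lemma om15_prod (n : ℕ) : (om15 n - n) * (om15 n + n) * ((om15 n)^2 + (n:ℝ)^2) = (n:ℝ)^3 := by
  linear_combination om15_pow4 n

lemma om15_sub_bounds (n : ℕ) (hn : 1 ≤ n) :
    (1:ℝ)/15 ≤ om15 n - n ∧ om15 n - n ≤ 1 := by
  have hn' : (1:ℝ) ≤ n := by exact_mod_cast hn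
  have hle := om15_le n hn
  have hlt := lt_om15 n hn
  have hprod := om15_prod n
  constructor
  · have ha1 : om15 n + n ≤ 3 * n := by linarith
    have ha2 : (om15 n)^2 + (n:ℝ)^2 ≤ 5 * (n:ℝ)^2 := by nlinarith
    have hP : (om15 n + n) * ((om15 n)^2 + (n:ℝ)^2) ≤ 15 * (n:ℝ)^3 := by
      calc (om15 n + n) * ((om15 n)^2 + (n:ℝ)^2) ≤ (3*n) * (5 * (n:ℝ)^2) :=
            mul_le_mul ha1 ha2 (by nlinarith) (by nlinarith)
        _ = 15 * (n:ℝ)^3 := by ring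
    have hPpos : 0 < (om15 n + n) * ((om15 n)^2 + (n:ℝ)^2) := by nlinarith
    nlinarith [pow_pos (show (0:ℝ) < n by linarith) 3]
  · linarith

lemma identity15 (n : ℕ) (hn : 1 ≤ n) :
    aF15 n + bF15 n + 2 * sF15 n = 3 * Real.log n := by
  have hn' : (1:ℝ) ≤ n := by exact_mod_cast hn
  have hlt := lt_om15 n hn
  have hsq : (0:ℝ) < (om15 n)^2 + (n:ℝ)^2 := by positivity
  have hs : sF15 n = Real.log ((om15 n)^2 + (n:ℝ)^2) / 2 := by
    rw [sF15, Real.log_sqrt hsq.le]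
  have ha : aF15 n = Real.log (om15 n + n) := by
    rw [aF15, abs_of_pos (by linarith)]
  have hb : bF15 n = Real.log (om15 n - n) := by
    rw [bF15, abs_of_pos (by linarith)]
  rw [ha, hb, hs]
  have : Real.log (om15 n + n) + Real.log (om15 n - n) + Real.log ((om15 n)^2 + (n:ℝ)^2)
      = 3 * Real.log n := by
    rw [← Real.log_mul (ne_of_gt (by linarith)) (ne_of_gt (by linarith)),
      ← Real.log_mul (ne_of_gt (by nlinarith)) (ne_of_gt hsq)]
    rw [show (om15 n + n) * (om15 n - n) * ((om15 n)^2 + (n:ℝ)^2) = (n:ℝ)^3 by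
      linear_combination om15_prod n]
    rw [Real.log_pow]; push_cast; ring
  linarith

lemma bF15_bounds (n : ℕ) (hn : 1 ≤ n) : -14 ≤ bF15 n ∧ bF15 n ≤ 0 := by
  obtain ⟨h1, h2⟩ := om15_sub_bounds n hn
  have hb : bF15 n = Real.log (om15 n - n) := by
    rw [bF15, abs_of_pos (by linarith)]
  rw [hb]
  constructor
  · have := Real.log_le_log (by norm_num : (0:ℝ) < 1/15) h1
    have h15 : Real.log (1/15) = - Real.log 15 := by
      rw [one_div, Real.log_inv]
    have : -Real.log 15 ≤ Real.log (om15 n - n) := by rw [← h15]; exact this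
    have hlog15 : Real.log 15 ≤ 14 := by
      linarith [Real.log_le_sub_one_of_pos (show (0:ℝ) < 15 by norm_num)]
    linarith
  · calc Real.log (om15 n - n) ≤ Real.log 1 := Real.log_le_log (by linarith) h2
    _ = 0 := Real.log_one

lemma aF15_bounds (n : ℕ) (hn : 1 ≤ n) :
    Real.log n ≤ aF15 n ∧ aF15 n ≤ Real.log n + 2 := by
  have hn' : (1:ℝ) ≤ n := by exact_mod_cast hn
  have hlt := lt_om15 n hn
  have hle := om15_le n hn
  have ha : aF15 n = Real.log (om15 n + n) := by
    rw [aF15, abs_of_pos (by linarith)]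
  rw [ha]
  constructor
  · exact Real.log_le_log (by linarith) (by linarith)
  · calc Real.log (om15 n + n) ≤ Real.log (3 * n) := Real.log_le_log (by linarith) (by linarith)
    _ = Real.log 3 + Real.log n := Real.log_mul (by norm_num) (by linarith)
    _ ≤ Real.log n + 2 := by
        linarith [Real.log_le_sub_one_of_pos (show (0:ℝ) < 3 by norm_num)]

lemma sF15_bounds (n : ℕ) (hn : 1 ≤ n) :
    Real.log n ≤ sF15 n ∧ sF15 n ≤ Real.log n + 2 := by
  have hn' : (1:ℝ) ≤ n := by exact_mod_cast hn
  have hlt := lt_om15 n hn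
  have hle := om15_le n hn
  have hsq : (0:ℝ) < (om15 n)^2 + (n:ℝ)^2 := by positivity
  have hs : sF15 n = Real.log ((om15 n)^2 + (n:ℝ)^2) / 2 := by
    rw [sF15, Real.log_sqrt hsq.le]
  rw [hs]
  have hlow : 2 * (n:ℝ)^2 ≤ (om15 n)^2 + (n:ℝ)^2 := by nlinarith
  have hhigh : (om15 n)^2 + (n:ℝ)^2 ≤ 5 * (n:ℝ)^2 := by nlinarith
  constructor
  · have := Real.log_le_log (by nlinarith) hlow
    rw [Real.log_mul (by norm_num) (ne_of_gt (by nlinarith)), Real.log_pow] at this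
    push_cast at this
    nlinarith [Real.log_nonneg (show (1:ℝ) ≤ 2 by norm_num),
      Real.log_nonneg (show (1:ℝ) ≤ (n:ℝ) by exact_mod_cast hn)]
  · have := Real.log_le_log (by nlinarith) hhigh
    rw [Real.log_mul (by norm_num) (ne_of_gt (by nlinarith)), Real.log_pow] at this
    push_cast at this
    nlinarith [Real.log_le_sub_one_of_pos (show (0:ℝ) < 5 by norm_num)]

lemma norm_u_sq15 (n : ℕ) : ‖uVec15 n‖^2 = 2 * (aF15 n - bF15 n)^2 := by
  rw [uVec15, EuclideanSpace.norm_eq, Real.sq_sqrt (by positivity)]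
  simp only [WithLp.equiv_symm_apply, WithLp.ofLp_toLp, Fin.sum_univ_three, Matrix.cons_val_zero,
    Matrix.cons_val_one, Matrix.head_cons, Matrix.cons_val_two, Matrix.tail_cons,
    Real.norm_eq_abs, sq_abs]
  unfold aF15 bF15 om15
  ring

lemma norm_w_sq15 (n : ℕ) : ‖wVec15 n‖^2 =
    2 * (3 * Real.log n - 2 * aF15 n - 2 * bF15 n)^2 + (6 * Real.log n - 8 * sF15 n)^2 := by
  rw [wVec15, EuclideanSpace.norm_eq, Real.sq_sqrt (by positivity)]
  simp only [WithLp.equiv_symm_apply, WithLp.ofLp_toLp, Fin.sum_univ_three, Matrix.cons_val_zero,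
    Matrix.cons_val_one, Matrix.head_cons, Matrix.cons_val_two, Matrix.tail_cons,
    Real.norm_eq_abs, sq_abs]
  unfold aF15 bF15 sF15 om15
  ring

lemma norm_w_sq15' (n : ℕ) (hn : 1 ≤ n) :
    ‖wVec15 n‖^2 = 6 * (4 * sF15 n - 3 * Real.log n)^2 := by
  have hab : aF15 n + bF15 n = 3 * Real.log n - 2 * sF15 n := by
    linarith [identity15 n hn]
  have h2 : 3 * Real.log n - 2 * aF15 n - 2 * bF15 n = 4 * sF15 n - 3 * Real.log n := by
    linarith
  rw [norm_w_sq15, h2]; ring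

/-- `‖u‖² = 2(log n)² + O(log n)`, `‖w‖² = 6(log n)² + O(log n)`, and
therefore `‖w‖/‖u‖ → √3` as `n → ∞`. -/
theorem norm_ratio_tendsto_sqrt_three :
    (fun n : ℕ => ‖uVec15 n‖ ^ 2 - 2 * (Real.log n) ^ 2) =O[atTop] (fun n : ℕ => Real.log n) ∧
    (fun n : ℕ => ‖wVec15 n‖ ^ 2 - 6 * (Real.log n) ^ 2) =O[atTop] (fun n : ℕ => Real.log n) ∧
    Tendsto (fun n : ℕ => ‖wVec15 n‖ / ‖uVec15 n‖) atTop (𝓝 (Real.sqrt 3)) := by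
  have hLtop : Tendsto (fun n : ℕ => Real.log n) atTop atTop :=
    Real.tendsto_log_atTop.comp tendsto_natCast_atTop_atTop
  have he1 : ∀ n : ℕ, 1 ≤ n → |aF15 n - bF15 n - Real.log n| ≤ 16 := by
    intro n hn
    obtain ⟨ha1, ha2⟩ := aF15_bounds n hn
    obtain ⟨hb1, hb2⟩ := bF15_bounds n hn
    rw [abs_le]; constructor <;> linarith
  have he2 : ∀ n : ℕ, 1 ≤ n → |4 * sF15 n - 3 * Real.log n - Real.log n| ≤ 16 := by
    intro n hn
    obtain ⟨h1, h2⟩ := sF15_bounds n hn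
    rw [abs_le]; constructor <;> linarith
  refine ⟨?_, ?_, ?_⟩
  · rw [isBigO_iff]
    refine ⟨600, ?_⟩
    filter_upwards [eventually_ge_atTop 1, hLtop.eventually_ge_atTop 1] with n hn hL
    have h := abs_le.mp (he1 n hn)
    rw [norm_u_sq15, Real.norm_eq_abs, Real.norm_eq_abs,
      abs_of_nonneg (by linarith : (0:ℝ) ≤ Real.log n), abs_le]
    constructor <;>
      nlinarith [sq_nonneg (aF15 n - bF15 n - Real.log n),
        mul_nonneg (by linarith : (0:ℝ) ≤ Real.log n)
          (by linarith : (0:ℝ) ≤ aF15 n - bF15 n - Real.log n + 16),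
        mul_nonneg (by linarith : (0:ℝ) ≤ Real.log n)
          (by linarith : (0:ℝ) ≤ 16 - (aF15 n - bF15 n - Real.log n))]
  · rw [isBigO_iff]
    refine ⟨2000, ?_⟩
    filter_upwards [eventually_ge_atTop 1, hLtop.eventually_ge_atTop 1] with n hn hL
    have h := abs_le.mp (he2 n hn)
    rw [norm_w_sq15' n hn, Real.norm_eq_abs, Real.norm_eq_abs,
      abs_of_nonneg (by linarith : (0:ℝ) ≤ Real.log n), abs_le]
    constructor <;>
      nlinarith [sq_nonneg (4 * sF15 n - 3 * Real.log n - Real.log n),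
        mul_nonneg (by linarith : (0:ℝ) ≤ Real.log n)
          (by linarith : (0:ℝ) ≤ 4 * sF15 n - 3 * Real.log n - Real.log n + 16),
        mul_nonneg (by linarith : (0:ℝ) ≤ Real.log n)
          (by linarith : (0:ℝ) ≤ 16 - (4 * sF15 n - 3 * Real.log n - Real.log n))]
  · -- the ratio
    have hq1 : Tendsto (fun n : ℕ => (aF15 n - bF15 n - Real.log n) / Real.log n)
        atTop (𝓝 0) := by
      apply squeeze_zero_norm'
        (a := fun n : ℕ => 16 / Real.log n)
      · filter_upwards [eventually_ge_atTop 1, hLtop.eventually_ge_atTop 1] with n hn hL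
        rw [Real.norm_eq_abs, abs_div, abs_of_nonneg (by linarith : (0:ℝ) ≤ Real.log n)]
        exact div_le_div_of_nonneg_right (he1 n hn) (by linarith) |>.trans_eq rfl
      · exact tendsto_const_nhds.div_atTop hLtop
    have hq2 : Tendsto (fun n : ℕ => (4 * sF15 n - 3 * Real.log n - Real.log n) / Real.log n)
        atTop (𝓝 0) := by
      apply squeeze_zero_norm'
        (a := fun n : ℕ => 16 / Real.log n)
      · filter_upwards [eventually_ge_atTop 1, hLtop.eventually_ge_atTop 1] with n hn hL
        rw [Real.norm_eq_abs, abs_div, abs_of_nonneg (by linarith : (0:ℝ) ≤ Real.log n)]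
        exact div_le_div_of_nonneg_right (he2 n hn) (by linarith) |>.trans_eq rfl
      · exact tendsto_const_nhds.div_atTop hLtop
    have hratio : Tendsto
        (fun n : ℕ => (4 * sF15 n - 3 * Real.log n) / (aF15 n - bF15 n)) atTop (𝓝 1) := by
      have h := (((tendsto_const_nhds (x := (1:ℝ)) (f := atTop)).add hq2).div
        ((tendsto_const_nhds (x := (1:ℝ)) (f := atTop)).add hq1) (by norm_num))
      rw [show ((1:ℝ) + 0) / (1 + 0) = 1 by norm_num] at h
      refine h.congr' ?_
      filter_upwards [eventually_ge_atTop 1, hLtop.eventually_ge_atTop 17] with n hn hL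
      have h1 := abs_le.mp (he1 n hn)
      have hLpos : (0:ℝ) < Real.log n := by linarith
      have hd : (0:ℝ) < aF15 n - bF15 n := by linarith
      simp only [Pi.div_apply]
      field_simp
      rw [show Real.log n + (aF15 n - bF15 n - Real.log n) = aF15 n - bF15 n by ring,
        mul_div_assoc, div_self hd.ne', mul_one]
      ring
    have hfinal : Tendsto
        (fun n : ℕ => Real.sqrt 3 * ((4 * sF15 n - 3 * Real.log n) / (aF15 n - bF15 n)))
        atTop (𝓝 (Real.sqrt 3)) := by
      have := tendsto_const_nhds (x := Real.sqrt 3) (f := atTop (α := ℕ)) |>.mul hratio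
      rwa [mul_one] at this
    refine hfinal.congr' ?_
    filter_upwards [eventually_ge_atTop 1, hLtop.eventually_ge_atTop 17] with n hn hL
    have h1 := abs_le.mp (he1 n hn)
    have h2 := abs_le.mp (he2 n hn)
    have hd : (0:ℝ) < aF15 n - bF15 n := by linarith
    have hc : (0:ℝ) < 4 * sF15 n - 3 * Real.log n := by linarith
    have hu : ‖uVec15 n‖ = Real.sqrt 2 * (aF15 n - bF15 n) := by
      rw [show ‖uVec15 n‖ = Real.sqrt (‖uVec15 n‖^2) from (Real.sqrt_sq (norm_nonneg _)).symm,
        norm_u_sq15, Real.sqrt_mul (by norm_num), Real.sqrt_sq hd.le]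
    have hw : ‖wVec15 n‖ = Real.sqrt 6 * (4 * sF15 n - 3 * Real.log n) := by
      rw [show ‖wVec15 n‖ = Real.sqrt (‖wVec15 n‖^2) from (Real.sqrt_sq (norm_nonneg _)).symm,
        norm_w_sq15' n hn, Real.sqrt_mul (by norm_num), Real.sqrt_sq hc.le]
    rw [hw, hu, show (6:ℝ) = 2 * 3 by norm_num, Real.sqrt_mul (by norm_num)]
    have hs2 : Real.sqrt 2 ≠ 0 := by positivity
    field_simp
end
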